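/- arXiv:0808.1276 — 4 statements merged into one kernel-verified Lean document; each statement's English description precedes it below -/
import Mathlib

section
/- If A is an n×n complex matrix all of whose eigenvalues have positive real part, and B, C are n×n matrices, then the controllability Gramian L = ∫₀^∞ e^{-tA} B B* e^{-tA*} dt converges and satisfies the Lyapunov equation A L + L A* = B B*. -/
open MeasureTheory Matrix NormedSpace
open Filter Topology Asymptotics
open scoped Nat

attribute [local instance] Matrix.linftyOpNormedAddCommGroup Matrix.linftyOpNormedRing
  Matrix.linftyOpNormedAlgebra

/-!
On the generalized eigenspace of `A` for `μ`, `e^{-tA}` acts as `e^{-tμ}` times a polynomial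
in `t`, so `e^{-tA} = O(e^{-εt})` for every `ε` below the real parts of the spectrum; the same
holds for `Aᴴ`, whose spectrum is the conjugate one. Hence `G t = e^{-tA} B Bᴴ e^{-tAᴴ}` is
`O(e^{-2εt})`, and since `G' = -(A G + G Aᴴ)`, the fundamental theorem of calculus on `(0, ∞)`
gives `A L + L Aᴴ = G 0 - lim G = B Bᴴ`.
-/

theorem integrableOn_Ioi_of_isBigO_exp_neg {E : Type*} [NormedAddCommGroup E] {f : ℝ → E}
    {a b : ℝ} (hb : 0 < b) (hf : Continuous f)
    (ho : f =O[atTop] fun t => Real.exp (-b * t)) : IntegrableOn f (Set.Ioi a) :=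
  ((hf.continuousOn.locallyIntegrableOn measurableSet_Ici).integrableOn_of_isBigO_atTop ho
    ⟨Set.Ioi b, Ioi_mem_atTop b, exp_neg_integrableOn_Ioi b hb⟩).mono_set Set.Ioi_subset_Ici_self

section BanachAlgebra

variable {𝔸 : Type*} [NormedRing 𝔸] [NormedAlgebra ℂ 𝔸]

theorem isBigO_exp_mul_mul_exp {A A' : 𝔸} {ε : ℝ}
    (hA : (fun t : ℝ => exp (-(t : ℂ) • A)) =O[atTop] fun t => Real.exp (-ε * t))
    (hA' : (fun t : ℝ => exp (-(t : ℂ) • A')) =O[atTop] fun t => Real.exp (-ε * t)) (X : 𝔸) :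
    (fun t : ℝ => exp (-(t : ℂ) • A) * X * exp (-(t : ℂ) • A')) =O[atTop]
      fun t => Real.exp (-(2 * ε) * t) :=
  (hA.mul (isBigO_const_const X one_ne_zero atTop)).mul hA' |>.congr_right fun t => by
    rw [mul_one, ← Real.exp_add]
    ring_nf

variable [CompleteSpace 𝔸]

theorem hasDerivAt_exp_neg_ofReal_smul (A : 𝔸) (t : ℝ) :
    HasDerivAt (fun s : ℝ => exp (-(s : ℂ) • A)) (-(A * exp (-(t : ℂ) • A))) t := by
  refine ((hasDerivAt_exp_smul_const' A (-(t : ℂ))).scomp t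
    (hasDerivAt_id t).ofReal_comp.neg).congr_deriv ?_
  simp

theorem hasDerivAt_exp_mul_mul_exp (A X A' : 𝔸) (t : ℝ) :
    HasDerivAt (fun s : ℝ => exp (-(s : ℂ) • A) * X * exp (-(s : ℂ) • A'))
      (-(A * (exp (-(t : ℂ) • A) * X * exp (-(t : ℂ) • A'))
        + exp (-(t : ℂ) • A) * X * exp (-(t : ℂ) • A') * A')) t := by
  have hcomm : exp (-(t : ℂ) • A') * A' = A' * exp (-(t : ℂ) • A') :=
    ((Commute.refl A').smul_left _).exp_left.eq
  refine (((hasDerivAt_exp_neg_ofReal_smul A t).mul_const X).mul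
    (hasDerivAt_exp_neg_ofReal_smul A' t)).congr_deriv ?_
  rw [mul_assoc _ _ A', hcomm]
  noncomm_ring

theorem mul_integral_Ioi_add_integral_Ioi_mul_of_hasDerivAt (A A' : 𝔸) {G : ℝ → 𝔸}
    (hderiv : ∀ t, HasDerivAt G (-(A * G t + G t * A')) t)
    (hint : IntegrableOn G (Set.Ioi 0)) (hlim : Tendsto G atTop (𝓝 0)) :
    A * (∫ t in Set.Ioi 0, G t) + (∫ t in Set.Ioi 0, G t) * A' = G 0 := by
  have hint' : IntegrableOn (fun t => A * G t + G t * A') (Set.Ioi 0) :=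
    (hint.const_mul A).add (hint.mul_const A')
  have hftc := integral_Ioi_of_hasDerivAt_of_tendsto (f := fun t => -G t)
    (hderiv 0).continuousAt.neg.continuousWithinAt
    (fun t _ => (hderiv t).neg.congr_deriv (neg_neg _)) hint' (by simpa using hlim.neg)
  rw [← integral_const_mul_of_integrable hint, ← integral_mul_const_of_integrable hint,
    ← integral_add (hint.const_mul A) (hint.mul_const A'), hftc]
  simp

variable {A A' : 𝔸} {ε : ℝ}

theorem integrableOn_Ioi_exp_mul_mul_exp (hε : 0 < ε)
    (hA : (fun t : ℝ => exp (-(t : ℂ) • A)) =O[atTop] fun t => Real.exp (-ε * t))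
    (hA' : (fun t : ℝ => exp (-(t : ℂ) • A')) =O[atTop] fun t => Real.exp (-ε * t)) (X : 𝔸) :
    IntegrableOn (fun t : ℝ => exp (-(t : ℂ) • A) * X * exp (-(t : ℂ) • A')) (Set.Ioi 0) :=
  integrableOn_Ioi_of_isBigO_exp_neg (by positivity)
    (continuous_iff_continuousAt.mpr fun t => (hasDerivAt_exp_mul_mul_exp A X A' t).continuousAt)
    (isBigO_exp_mul_mul_exp hA hA' X)

theorem mul_integral_exp_mul_mul_exp_add_integral_mul (hε : 0 < ε)
    (hA : (fun t : ℝ => exp (-(t : ℂ) • A)) =O[atTop] fun t => Real.exp (-ε * t))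
    (hA' : (fun t : ℝ => exp (-(t : ℂ) • A')) =O[atTop] fun t => Real.exp (-ε * t)) (X : 𝔸) :
    A * (∫ t in Set.Ioi (0 : ℝ), exp (-(t : ℂ) • A) * X * exp (-(t : ℂ) • A')) +
      (∫ t in Set.Ioi (0 : ℝ), exp (-(t : ℂ) • A) * X * exp (-(t : ℂ) • A')) * A' = X := by
  have hlim := (isBigO_exp_mul_mul_exp hA hA' X).trans_tendsto <|
    Real.tendsto_exp_atBot.comp (tendsto_id.const_mul_atTop_of_neg (by linarith))
  rw [mul_integral_Ioi_add_integral_Ioi_mul_of_hasDerivAt A A'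
    (hasDerivAt_exp_mul_mul_exp A X A') (integrableOn_Ioi_exp_mul_mul_exp hε hA hA' X) hlim]
  simp

end BanachAlgebra

namespace Matrix

variable {m : Type*} [Fintype m] [DecidableEq m]

theorem exp_smul_mulVec_of_pow_mulVec_eq_zero (N : Matrix m m ℂ) {x : m → ℂ} {k : ℕ}
    (hk : N ^ k *ᵥ x = 0) (s : ℂ) :
    exp (s • N) *ᵥ x = ∑ j ∈ Finset.range k, ((j ! : ℂ)⁻¹ * s ^ j) • (N ^ j *ᵥ x) := by
  have hexp : HasSum (fun j : ℕ => ((j ! : ℂ)⁻¹ • (s • N) ^ j) *ᵥ x) (exp (s • N) *ᵥ x) := by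
    rw [exp_eq_tsum ℂ]
    exact (expSeries_summable' (s • N)).hasSum.map (mulVec.addMonoidHomLeft x)
      (continuous_id.matrix_mulVec continuous_const)
  refine hexp.unique (hasSum_sum_of_ne_finset_zero fun j hj => ?_) |>.trans
    (Finset.sum_congr rfl fun j _ => ?_)
  · rw [Finset.mem_range, not_lt] at hj
    have hNj : N ^ j *ᵥ x = 0 := by
      rw [← Nat.sub_add_cancel hj, pow_add, ← mulVec_mulVec, hk, mulVec_zero]
    rw [smul_pow, smul_mulVec, smul_mulVec, hNj, smul_zero, smul_zero]
  · rw [smul_pow, smul_mulVec, smul_mulVec, smul_smul]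

theorem exp_smul_eq_exp_smul_exp_smul_sub_smul_one (A : Matrix m m ℂ) (s μ : ℂ) :
    exp (s • A) = Complex.exp (s * μ) • exp (s • (A - μ • 1)) := by
  have hsplit : s • A = (s * μ) • (1 : Matrix m m ℂ) + s • (A - μ • 1) := by
    rw [smul_sub, smul_smul, add_sub_cancel]
  have hcomm : Commute ((s * μ) • (1 : Matrix m m ℂ)) (s • (A - μ • 1)) :=
    ((Commute.one_left _).smul_left _).smul_right _
  have hscalar : exp ((s * μ) • (1 : Matrix m m ℂ)) = Complex.exp (s * μ) • 1 := by
    rw [smul_one_eq_diagonal, exp_diagonal, smul_one_eq_diagonal]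
    simp [Complex.exp_eq_exp_ℂ]
  rw [hsplit, exp_add_of_commute _ _ hcomm, hscalar, smul_mul_assoc, one_mul]

theorem isBigO_exp_neg_smul_mulVec_of_mem_maxGenEigenspace (A : Matrix m m ℂ) {μ : ℂ}
    {x : m → ℂ} (hx : x ∈ Module.End.maxGenEigenspace (toLin' A) μ) {ε : ℝ} (hε : ε < μ.re) :
    (fun t : ℝ => exp (-(t : ℂ) • A) *ᵥ x) =O[atTop] fun t => Real.exp (-ε * t) := by
  obtain ⟨k, hk⟩ := (Module.End.mem_maxGenEigenspace _ _ _).mp hx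
  have hNk : (A - μ • 1) ^ k *ᵥ x = 0 := by
    rw [← toLin'_apply]
    convert hk
    change toLinAlgEquiv' ((A - μ • 1) ^ k) = (toLinAlgEquiv' A - μ • 1) ^ k
    rw [map_pow, map_sub, map_smul, map_one]
  have hδ : 0 < μ.re - ε := sub_pos.mpr hε
  have hscalar : (fun t : ℝ => Complex.exp (-(t : ℂ) * μ)) =O[atTop]
      fun t => Real.exp (-μ.re * t) :=
    isBigO_of_le _ fun t => by simp [Complex.norm_exp, mul_comm]
  have hpoly : (fun t : ℝ => ∑ j ∈ Finset.range k,
      ((j ! : ℂ)⁻¹ * (-(t : ℂ)) ^ j) • ((A - μ • 1) ^ j *ᵥ x)) =O[atTop]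
      fun t => Real.exp ((μ.re - ε) * t) := by
    refine IsBigO.fun_sum fun j _ => ?_
    have hpow : (fun t : ℝ => (j ! : ℂ)⁻¹ * (-(t : ℂ)) ^ j) =O[atTop]
        fun t => Real.exp ((μ.re - ε) * t) :=
      ((isBigO_of_le _ fun t => by simp).trans
        (isLittleO_pow_exp_pos_mul_atTop j hδ).isBigO).const_mul_left _
    exact ((ContinuousLinearMap.smulRight (1 : ℂ →L[ℂ] ℂ) ((A - μ • 1) ^ j *ᵥ x)).isBigO_comp
      _ atTop).trans hpow
  refine ((hscalar.smul hpoly).congr_left fun t => ?_).congr_right fun t => ?_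
  · rw [exp_smul_eq_exp_smul_exp_smul_sub_smul_one A _ μ, smul_mulVec,
      exp_smul_mulVec_of_pow_mulVec_eq_zero _ hNk]
  · rw [smul_eq_mul, ← Real.exp_add]
    ring_nf

theorem isBigO_exp_neg_smul_mulVec (A : Matrix m m ℂ) {ε : ℝ}
    (hε : ∀ μ ∈ spectrum ℂ A, ε < μ.re) (v : m → ℂ) :
    (fun t : ℝ => exp (-(t : ℂ) • A) *ᵥ v) =O[atTop] fun t => Real.exp (-ε * t) := by
  have hv : v ∈ ⨆ μ, Module.End.maxGenEigenspace (toLin' A) μ := by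
    rw [Module.End.iSup_maxGenEigenspace_eq_top]
    exact Submodule.mem_top
  induction hv using Submodule.iSup_induction' with
  | mem μ x hx =>
    rcases eq_or_ne x 0 with rfl | hx0
    · exact (isBigO_zero _ _).congr_left fun t => (mulVec_zero _).symm
    have hμ : Module.End.HasUnifEigenvalue (toLin' A) μ ⊤ :=
      (Submodule.ne_bot_iff _).mpr ⟨x, hx, hx0⟩
    rw [Module.End.hasUnifEigenvalue_iff_hasUnifEigenvalue_one (by simp)] at hμ
    refine isBigO_exp_neg_smul_mulVec_of_mem_maxGenEigenspace A hx (hε μ ?_)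
    simpa [spectrum_toLin'] using hμ.mem_spectrum
  | zero => exact (isBigO_zero _ _).congr_left fun t => (mulVec_zero _).symm
  | add x y _ _ hx hy => simpa [mulVec_add] using hx.add hy

theorem isBigO_exp_neg_smul (A : Matrix m m ℂ) {ε : ℝ} (hε : ∀ μ ∈ spectrum ℂ A, ε < μ.re) :
    (fun t : ℝ => exp (-(t : ℂ) • A)) =O[atTop] fun t => Real.exp (-ε * t) := by
  let columnsToMatrix : (m → m → ℂ) →ₗ[ℂ] Matrix m m ℂ :=
    { toFun := fun w => of fun i j => w j i
      map_add' := fun _ _ => rfl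
      map_smul' := fun _ _ => rfl }
  have hcols : (fun t : ℝ => fun j => exp (-(t : ℂ) • A) *ᵥ Pi.single j 1) =O[atTop]
      fun t => Real.exp (-ε * t) :=
    isBigO_pi.mpr fun j => isBigO_exp_neg_smul_mulVec A hε _
  refine (LinearMap.toContinuousLinearMap columnsToMatrix |>.isBigO_comp _ atTop).trans hcols
    |>.congr_left fun t => ?_
  ext i j
  change (exp (-(t : ℂ) • A) *ᵥ Pi.single j 1) i = _
  simp

theorem exists_pos_forall_lt_re {A : Matrix m m ℂ} (hA : ∀ μ ∈ spectrum ℂ A, 0 < μ.re) :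
    ∃ ε > 0, ∀ μ ∈ spectrum ℂ A, ε < μ.re := by
  have h : ∀ᶠ ε in 𝓝[>] (0 : ℝ), ∀ μ ∈ spectrum ℂ A, ε < μ.re := nhdsWithin_le_nhds <|
    A.finite_spectrum.eventually_all.mpr fun μ hμ => eventually_lt_nhds (hA μ hμ)
  obtain ⟨ε, hlt, hε⟩ := (h.and self_mem_nhdsWithin).exists
  exact ⟨ε, hε, hlt⟩

end Matrix

/-- If `A` is an `n×n` complex matrix all of whose eigenvalues have positive
real part, and `B` is an `n×n` complex matrix, then the controllability Gramian
`L = ∫₀^∞ e^{-tA} B Bᴴ e^{-tAᴴ} dt` converges (entrywise Bochner integrability) and satisfies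
the Lyapunov equation `A * L + L * Aᴴ = B * Bᴴ`. -/
theorem stmt0 (n : ℕ) (A B : Matrix (Fin n) (Fin n) ℂ)
    (hA : ∀ μ ∈ spectrum ℂ A, 0 < μ.re) :
    (∀ i j, IntegrableOn
        (fun t : ℝ =>
          (exp ((-(t : ℂ)) • A) * B * Bᴴ * exp ((-(t : ℂ)) • Aᴴ)) i j)
        (Set.Ioi (0 : ℝ))) ∧
      A * (Matrix.of fun i j =>
            ∫ t in Set.Ioi (0 : ℝ),
              (exp ((-(t : ℂ)) • A) * B * Bᴴ * exp ((-(t : ℂ)) • Aᴴ)) i j) +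
        (Matrix.of fun i j =>
            ∫ t in Set.Ioi (0 : ℝ),
              (exp ((-(t : ℂ)) • A) * B * Bᴴ * exp ((-(t : ℂ)) • Aᴴ)) i j) * Aᴴ
      = B * Bᴴ := by
  obtain ⟨ε, hε, hspec⟩ := exists_pos_forall_lt_re hA
  have hspec' : ∀ μ ∈ spectrum ℂ Aᴴ, ε < μ.re := fun μ hμ => by
    rw [← star_eq_conjTranspose, spectrum.map_star] at hμ
    simpa using hspec _ hμ
  have hU := isBigO_exp_neg_smul A hspec
  have hW := isBigO_exp_neg_smul Aᴴ hspec'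
  have hint := integrableOn_Ioi_exp_mul_mul_exp hε hU hW (B * Bᴴ)
  simp_rw [mul_assoc _ B Bᴴ]
  let entry (i j : Fin n) := LinearMap.toContinuousLinearMap (entryLinearMap ℂ ℂ i j)
  have hgramian : (of fun i j => ∫ t in Set.Ioi (0 : ℝ),
        (exp (-(t : ℂ) • A) * (B * Bᴴ) * exp (-(t : ℂ) • Aᴴ)) i j) =
      ∫ t in Set.Ioi (0 : ℝ), exp (-(t : ℂ) • A) * (B * Bᴴ) * exp (-(t : ℂ) • Aᴴ) :=
    ext fun i j => (entry i j).integral_comp_comm hint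
  refine ⟨fun i j => (entry i j).integrable_comp hint, ?_⟩
  rw [hgramian]
  exact mul_integral_exp_mul_mul_exp_add_integral_mul hε hU hW (B * Bᴴ)
end

section
/- Let Ψ be a bounded solution of the Hamiltonian system J Ψ' = (λE + F)Ψ on (0,∞) with E, F bounded symmetric matrix functions, and suppose Ψ ∈ L²((0,∞); ℝ^{2m}). Then the kernel K(x,y) = ⟨JΨ(x), Ψ(y)⟩/(x-y) defines a Hilbert–Schmidt operator on L²(0,∞), i.e. ∫₀^∞∫₀^∞ |K(x,y)|² dx dy < ∞. -/
open Matrix Set MeasureTheory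

/-!
Since `J² = -1`, the equation `JΨ' = (λE + F)Ψ` bounds `Ψ'` by the bounds on `E`, `F` and `Ψ`,
so `Ψ` is Lipschitz on `(0,∞)`. As `⟨Jv, v⟩ = 0`, the numerator of `K(x,y)` equals
`⟨J(Ψ(x) - Ψ(y)), Ψ(y)⟩`, which is both `O(|Ψ(y)|)` and `O(|x - y| |Ψ(y)|)`. Hence
`K(x,y)² ≲ |Ψ(y)|² / (1 + (x - y)²)`, the integrand of the convolution of the integrable
functions `|Ψ|²` and `1 / (1 + t²)`, which is integrable on the plane.
-/

theorem sq_div_mul_one_add_sq_le {k t a b : ℝ} (ha : |k| ≤ a) (hb : |k| ≤ b * |t|) :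
    (k / t) ^ 2 * (1 + t ^ 2) ≤ a ^ 2 + b ^ 2 := by
  rcases eq_or_ne t 0 with rfl | ht
  · rw [div_zero, zero_pow two_ne_zero, zero_mul]
    positivity
  have hkt : |k / t| ≤ b := by rwa [abs_div, div_le_iff₀ (abs_pos.2 ht)]
  calc (k / t) ^ 2 * (1 + t ^ 2) = |k| ^ 2 + |k / t| ^ 2 := by
        rw [sq_abs, sq_abs, div_pow, mul_add, mul_one, div_mul_cancel₀ _ (pow_ne_zero 2 ht),
          add_comm]
    _ ≤ a ^ 2 + b ^ 2 := by gcongr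

namespace Matrix

variable {n l R : Type*} [Fintype n] [Fintype l] [DecidableEq l]

theorem norm_dotProduct_le [SeminormedRing R] (u v : n → R) :
    ‖u ⬝ᵥ v‖ ≤ Fintype.card n * ‖u‖ * ‖v‖ := by
  calc ‖u ⬝ᵥ v‖ ≤ ∑ i, ‖u i‖ * ‖v i‖ := (norm_sum_le _ _).trans (by gcongr; exact norm_mul_le _ _)
    _ ≤ ∑ _i : n, ‖u‖ * ‖v‖ := by gcongr <;> apply norm_le_pi_norm
    _ = Fintype.card n * ‖u‖ * ‖v‖ := by simp [mul_assoc]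

theorem norm_mulVec_le_of_norm_entry_le [SeminormedRing R] {A : Matrix n n R} {v : n → R}
    {c M : ℝ} (hA : ∀ i j, ‖A i j‖ ≤ c) (hv : ‖v‖ ≤ M) :
    ‖A *ᵥ v‖ ≤ Fintype.card n * c * M := by
  cases isEmpty_or_nonempty n
  · simp [Subsingleton.elim (A *ᵥ v) 0]
  refine (pi_norm_le_iff_of_nonempty _).2 fun i => ?_
  calc ‖(A *ᵥ v) i‖ ≤ ∑ j, ‖A i j‖ * ‖v j‖ :=
        (norm_sum_le _ _).trans (by gcongr; exact norm_mul_le _ _)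
    _ ≤ ∑ _j : n, c * M := by
        gcongr with j
        · exact (norm_nonneg _).trans (hA i j)
        · exact hA i j
        · exact (norm_le_pi_norm v j).trans hv
    _ = Fintype.card n * c * M := by simp [mul_assoc]

theorem J_mulVec [CommRing R] (v : l ⊕ l → R) :
    J l R *ᵥ v = Sum.elim (fun i => -v (Sum.inr i)) (fun i => v (Sum.inl i)) := by
  ext (i | i) <;> simp [J, fromBlocks_mulVec, neg_mulVec]

theorem J_mulVec_J_mulVec [CommRing R] (v : l ⊕ l → R) : J l R *ᵥ (J l R *ᵥ v) = -v := by
  rw [mulVec_mulVec, J_squared, neg_mulVec, one_mulVec]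

theorem J_mulVec_dotProduct_self [CommRing R] (v : l ⊕ l → R) : J l R *ᵥ v ⬝ᵥ v = 0 := by
  simp [J_mulVec, dotProduct, Fintype.sum_sum_type, mul_comm]

theorem norm_J_mulVec_le [SeminormedCommRing R] (v : l ⊕ l → R) : ‖J l R *ᵥ v‖ ≤ ‖v‖ := by
  refine (pi_norm_le_iff_of_nonneg (norm_nonneg v)).2 fun i => ?_
  rcases i with i | i
  · simpa [J_mulVec] using norm_le_pi_norm v (Sum.inr i)
  · simpa [J_mulVec] using norm_le_pi_norm v (Sum.inl i)

theorem norm_J_mulVec [SeminormedCommRing R] (v : l ⊕ l → R) : ‖J l R *ᵥ v‖ = ‖v‖ := by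
  refine le_antisymm (norm_J_mulVec_le v) ?_
  simpa only [J_mulVec_J_mulVec, norm_neg] using norm_J_mulVec_le (J l R *ᵥ v)

theorem norm_J_mulVec_dotProduct_le [SeminormedCommRing R] (u v : l ⊕ l → R) :
    ‖J l R *ᵥ u ⬝ᵥ v‖ ≤ Fintype.card (l ⊕ l) * ‖u - v‖ * ‖v‖ := by
  have hsub : J l R *ᵥ u ⬝ᵥ v = J l R *ᵥ (u - v) ⬝ᵥ v := by
    rw [mulVec_sub, sub_dotProduct, J_mulVec_dotProduct_self, sub_zero]
  rw [hsub, ← norm_J_mulVec (u - v)]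
  exact norm_dotProduct_le _ _

theorem norm_le_of_J_mulVec_eq_mulVec [SeminormedCommRing R] {w v : l ⊕ l → R}
    {A : Matrix (l ⊕ l) (l ⊕ l) R} {c M : ℝ} (hw : J l R *ᵥ w = A *ᵥ v)
    (hA : ∀ i j, ‖A i j‖ ≤ c) (hv : ‖v‖ ≤ M) : ‖w‖ ≤ Fintype.card (l ⊕ l) * c * M := by
  calc ‖w‖ = ‖J l R *ᵥ (J l R *ᵥ w)‖ := by rw [J_mulVec_J_mulVec, norm_neg]
    _ ≤ Fintype.card (l ⊕ l) * c * M := by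
      rw [hw, norm_J_mulVec]
      exact norm_mulVec_le_of_norm_entry_le hA hv

theorem sq_J_mulVec_dotProduct_div_le {u v : l ⊕ l → ℝ} {t M L : ℝ} (hu : ‖u‖ ≤ M)
    (huv : ‖u - v‖ ≤ L * |t|) :
    (J l ℝ *ᵥ u ⬝ᵥ v / t) ^ 2 ≤
      (Fintype.card (l ⊕ l) : ℝ) ^ 2 * (M ^ 2 + L ^ 2) * ‖v‖ ^ 2 * (1 + t ^ 2)⁻¹ := by
  set C : ℝ := (Fintype.card (l ⊕ l) : ℝ)
  have hM : |J l ℝ *ᵥ u ⬝ᵥ v| ≤ C * M * ‖v‖ := by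
    rw [← Real.norm_eq_abs]
    refine (norm_dotProduct_le _ _).trans ?_
    rw [norm_J_mulVec]
    gcongr
  have hL : |J l ℝ *ᵥ u ⬝ᵥ v| ≤ C * L * ‖v‖ * |t| := by
    rw [← Real.norm_eq_abs]
    refine (norm_J_mulVec_dotProduct_le _ _).trans ?_
    calc C * ‖u - v‖ * ‖v‖ ≤ C * (L * |t|) * ‖v‖ := by gcongr
      _ = C * L * ‖v‖ * |t| := by ring
  rw [← div_eq_mul_inv, le_div_iff₀ (by positivity)]
  exact (sq_div_mul_one_add_sq_le hM hL).trans_eq (by ring)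

end Matrix

theorem ContinuousOn.mulVec_dotProduct_comp_prod {ι : Type*} [Fintype ι] {Ψ : ℝ → ι → ℝ}
    {s : Set ℝ} (hΨ : ContinuousOn Ψ s) (A : Matrix ι ι ℝ) :
    ContinuousOn (fun p : ℝ × ℝ => A *ᵥ Ψ p.1 ⬝ᵥ Ψ p.2) (s ×ˢ s) := by
  have hA : Continuous fun q : (ι → ℝ) × (ι → ℝ) => A *ᵥ q.1 ⬝ᵥ q.2 := by fun_prop
  have hΨΨ : ContinuousOn (fun p : ℝ × ℝ => (Ψ p.1, Ψ p.2)) (s ×ˢ s) :=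
    (hΨ.comp continuousOn_fst fun _ hp => hp.1).prodMk (hΨ.comp continuousOn_snd fun _ hp => hp.2)
  exact (hA.comp_continuousOn hΨΨ :)

theorem ContinuousOn.aestronglyMeasurable_sq_div_sub {g : ℝ × ℝ → ℝ} {s : Set ℝ}
    (hg : ContinuousOn g (s ×ˢ s)) (hs : MeasurableSet s) :
    AEStronglyMeasurable (fun p => (g p / (p.1 - p.2)) ^ 2) (volume.restrict (s ×ˢ s)) :=
  ((hg.aestronglyMeasurable (hs.prod hs)).aemeasurable.div
    (measurable_fst.sub measurable_snd).aemeasurable).pow_const 2 |>.aestronglyMeasurable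

theorem integrableOn_prod_of_norm_le_mul_inv_one_add_sq_sub {k : ℝ × ℝ → ℝ} {f : ℝ → ℝ}
    {s : Set ℝ} (hs : MeasurableSet s) (hf : IntegrableOn f s)
    (hk : AEStronglyMeasurable k (volume.restrict (s ×ˢ s)))
    (hle : ∀ p ∈ s ×ˢ s, ‖k p‖ ≤ f p.2 * (1 + (p.1 - p.2) ^ 2)⁻¹) :
    IntegrableOn k (s ×ˢ s) := by
  have hdom : Integrable fun p : ℝ × ℝ => s.indicator f p.2 * (1 + (p.1 - p.2) ^ 2)⁻¹ := by
    rw [Measure.volume_eq_prod]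
    exact ((integrable_indicator_iff hs).2 hf).convolution_integrand (ContinuousLinearMap.mul ℝ ℝ)
      integrable_inv_one_add_sq
  refine hdom.integrableOn.mono' hk ?_
  filter_upwards [ae_restrict_mem (hs.prod hs)] with p hp
  simpa only [indicator_of_mem hp.2] using hle p hp

theorem stmt9_general (m : ℕ) (lam : ℝ)
    (J : Matrix (Fin m ⊕ Fin m) (Fin m ⊕ Fin m) ℝ)
    (hJ : J = Matrix.fromBlocks 0 (-1) 1 0)
    (E F : ℝ → Matrix (Fin m ⊕ Fin m) (Fin m ⊕ Fin m) ℝ)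
    (c₁ c₂ : ℝ)
    (hEbdd : ∀ x : ℝ, 0 < x → ∀ i j, |E x i j| ≤ c₁)
    (hFbdd : ∀ x : ℝ, 0 < x → ∀ i j, |F x i j| ≤ c₂)
    (Ψ Ψ' : ℝ → (Fin m ⊕ Fin m → ℝ))
    (hΨ : ∀ x : ℝ, 0 < x → HasDerivAt Ψ (Ψ' x) x)
    (M : ℝ) (hΨbdd : ∀ x : ℝ, 0 < x → ‖Ψ x‖ ≤ M)
    (hΨL2 : IntegrableOn (fun x => ‖Ψ x‖ ^ 2) (Ioi (0 : ℝ)))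
    (heq : ∀ x : ℝ, 0 < x → J.mulVec (Ψ' x) = (lam • E x + F x).mulVec (Ψ x)) :
    IntegrableOn
      (fun p : ℝ × ℝ => ((J.mulVec (Ψ p.1) ⬝ᵥ Ψ p.2) / (p.1 - p.2)) ^ 2)
      (Ioi (0 : ℝ) ×ˢ Ioi (0 : ℝ)) := by
  change J = Matrix.J (Fin m) ℝ at hJ
  subst hJ
  set L := (Fintype.card (Fin m ⊕ Fin m) : ℝ) * (|lam| * c₁ + c₂) * M
  have hΨ'bdd (x : ℝ) (hx : 0 < x) : ‖Ψ' x‖ ≤ L := by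
    refine norm_le_of_J_mulVec_eq_mulVec (heq x hx) (fun i j => ?_) (hΨbdd x hx)
    calc ‖(lam • E x + F x) i j‖ ≤ |lam| * |E x i j| + |F x i j| := by
          simpa [abs_mul] using abs_add_le (lam * E x i j) (F x i j)
      _ ≤ |lam| * c₁ + c₂ := by gcongr; exacts [hEbdd x hx i j, hFbdd x hx i j]
  have hLip (x y : ℝ) (hx : 0 < x) (hy : 0 < y) : ‖Ψ x - Ψ y‖ ≤ L * |x - y| := by
    simpa [Real.norm_eq_abs] using
      (convex_Ioi (0 : ℝ)).norm_image_sub_le_of_norm_hasDerivWithin_le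
        (fun z hz => (hΨ z hz).hasDerivWithinAt) hΨ'bdd hy hx
  have hΨcont : ContinuousOn Ψ (Ioi 0) := fun x hx => (hΨ x hx).continuousAt.continuousWithinAt
  refine integrableOn_prod_of_norm_le_mul_inv_one_add_sq_sub measurableSet_Ioi
    (hΨL2.const_mul ((Fintype.card (Fin m ⊕ Fin m) : ℝ) ^ 2 * (M ^ 2 + L ^ 2))) ?_ fun p hp => ?_
  · exact (hΨcont.mulVec_dotProduct_comp_prod _).aestronglyMeasurable_sq_div_sub measurableSet_Ioi
  · rw [Real.norm_eq_abs, abs_sq]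
    exact sq_J_mulVec_dotProduct_div_le (hΨbdd p.1 hp.1) (hLip p.1 p.2 hp.1 hp.2)

/-- Let `Ψ` be a bounded solution of the Hamiltonian system
`J Ψ' = (λE + F)Ψ` on `(0,∞)` with `E, F` bounded symmetric matrix functions, and
`Ψ ∈ L²((0,∞); ℝ^{2m})`.  Then `K(x,y) = ⟨JΨ(x), Ψ(y)⟩/(x−y)` is a Hilbert–Schmidt
kernel: `∫₀^∞∫₀^∞ |K(x,y)|² dx dy < ∞`. -/
theorem stmt9 (m : ℕ) (lam : ℝ)
    (J : Matrix (Fin m ⊕ Fin m) (Fin m ⊕ Fin m) ℝ)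
    (hJ : J = Matrix.fromBlocks 0 (-1) 1 0)
    (E F : ℝ → Matrix (Fin m ⊕ Fin m) (Fin m ⊕ Fin m) ℝ)
    (hE : ∀ x : ℝ, 0 < x → (E x).IsSymm) (hF : ∀ x : ℝ, 0 < x → (F x).IsSymm)
    (c₁ c₂ : ℝ)
    (hEbdd : ∀ x : ℝ, 0 < x → ∀ i j, |E x i j| ≤ c₁)
    (hFbdd : ∀ x : ℝ, 0 < x → ∀ i j, |F x i j| ≤ c₂)
    (Ψ Ψ' : ℝ → (Fin m ⊕ Fin m → ℝ))
    (hΨ : ∀ x : ℝ, 0 < x → HasDerivAt Ψ (Ψ' x) x)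
    (hΨcont : ContinuousOn Ψ (Ioi (0 : ℝ)))
    (M : ℝ) (hΨbdd : ∀ x : ℝ, 0 < x → ‖Ψ x‖ ≤ M)
    (hΨL2 : IntegrableOn (fun x => ‖Ψ x‖ ^ 2) (Ioi (0 : ℝ)))
    (heq : ∀ x : ℝ, 0 < x → J.mulVec (Ψ' x) = (lam • E x + F x).mulVec (Ψ x)) :
    IntegrableOn
      (fun p : ℝ × ℝ => ((J.mulVec (Ψ p.1) ⬝ᵥ Ψ p.2) / (p.1 - p.2)) ^ 2)
      (Ioi (0 : ℝ) ×ˢ Ioi (0 : ℝ)) :=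
  stmt9_general m lam J hJ E F c₁ c₂ hEbdd hFbdd Ψ Ψ' hΨ M hΨbdd hΨL2 heq
end

section
/- Let H₀ be a Hilbert space and suppose a continuous kernel satisfies K(x,y) = ∫₀^∞ ⟨φ(s+x), φ(s+y)⟩_{H₀} ds for φ ∈ L²((0,∞); H₀). Then for every t > 0, the shifted kernel K_t(x,y) := K(x+t, y+t) is the kernel of Γ_φ* P_{(t,∞)} Γ_φ, where Γ_φ : L²(0,∞) → L²((0,∞);H₀) is the (vectorial) Hankel operator with symbol φ and P_{(t,∞)} is the projection onto L²(t,∞). In particular 0 ≤ K_t ≤ K_0 as operators, and K_t decreases as t increases. -/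
open MeasureTheory Set
open scoped ComplexInnerProductSpace

theorem setIntegral_Ioi_eq_setIntegral_Ioi_zero_comp_add {E : Type*} [NormedAddCommGroup E]
    [NormedSpace ℝ E] (g : ℝ → E) (t : ℝ) :
    ∫ s in Ioi t, g s = ∫ s in Ioi (0 : ℝ), g (s + t) := by
  rw [← (measurePreserving_add_right volume t).setIntegral_preimage_emb
    (measurableEmbedding_addRight t)]
  congr 1
  ext s
  simp

theorem antitoneOn_setIntegral_Ioi {g : ℝ → ℝ} {a : ℝ} (hg : IntegrableOn g (Ioi a))
    (hg_nonneg : ∀ s ∈ Ioi a, 0 ≤ g s) :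
    AntitoneOn (fun t => ∫ s in Ioi t, g s) (Ici a) := fun _ ht₁ _ _ ht =>
  setIntegral_mono_set (hg.mono_set (Ioi_subset_Ioi ht₁))
    ((ae_restrict_mem measurableSet_Ioi).mono fun s hs => hg_nonneg s (Ioi_subset_Ioi ht₁ hs))
    (Ioi_subset_Ioi ht).eventuallyLE

theorem stmt11_general {H₀ : Type*} [NormedAddCommGroup H₀] [InnerProductSpace ℂ H₀]
    (φ : ℝ → H₀)
    (K : ℝ → ℝ → ℂ)
    (hK : ∀ x y : ℝ, 0 < x → 0 < y →
      K x y = ∫ s in Ioi (0 : ℝ), (⟪φ (s + x), φ (s + y)⟫ : ℂ)) :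
    (∀ t x y : ℝ, 0 < t → 0 < x → 0 < y →
      K (x + t) (y + t) = ∫ s in Ioi t, (⟪φ (s + x), φ (s + y)⟫ : ℂ)) ∧
    ∀ f : ℝ → ℂ,
      IntegrableOn (fun s => ‖∫ u in Ioi (0 : ℝ), f u • φ (s + u)‖ ^ 2) (Ioi (0 : ℝ)) →
      (∀ t : ℝ, 0 ≤ t →
          0 ≤ ∫ s in Ioi t, ‖∫ u in Ioi (0 : ℝ), f u • φ (s + u)‖ ^ 2) ∧
      AntitoneOn (fun t => ∫ s in Ioi t, ‖∫ u in Ioi (0 : ℝ), f u • φ (s + u)‖ ^ 2)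
        (Ici (0 : ℝ)) := by
  refine ⟨fun t x y ht hx hy => ?_, fun f hf => ⟨fun t _ => ?_, ?_⟩⟩
  · rw [hK _ _ (by linarith) (by linarith), setIntegral_Ioi_eq_setIntegral_Ioi_zero_comp_add _ t]
    congr 1 with s
    ring_nf
  · exact setIntegral_nonneg measurableSet_Ioi fun s _ => by positivity
  · exact antitoneOn_setIntegral_Ioi hf fun s _ => by positivity

/-- Suppose the continuous kernel satisfies
`K(x,y) = ∫₀^∞ ⟪φ(s+x), φ(s+y)⟫ ds` for `φ ∈ L²((0,∞); H₀)`.  Then for every `t > 0` the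
shifted kernel `K(x+t, y+t)` equals `∫_t^∞ ⟪φ(s+x), φ(s+y)⟫ ds`, which is the kernel of
`Γ_φ* P_{(t,∞)} Γ_φ`; in particular the associated quadratic forms
`Q(t) = ∫_t^∞ ‖(Γ_φ f)(s)‖² ds` are nonnegative and decrease as `t` increases
(`0 ≤ K_t ≤ K_0`). -/
theorem stmt11 {H₀ : Type*} [NormedAddCommGroup H₀] [InnerProductSpace ℂ H₀]
    [CompleteSpace H₀]
    (φ : ℝ → H₀) (hφ : MemLp φ 2 (volume.restrict (Ioi (0 : ℝ))))
    (hint : ∀ x y : ℝ, 0 < x → 0 < y →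
      IntegrableOn (fun s => (⟪φ (s + x), φ (s + y)⟫ : ℂ)) (Ioi (0 : ℝ)))
    (K : ℝ → ℝ → ℂ)
    (hK : ∀ x y : ℝ, 0 < x → 0 < y →
      K x y = ∫ s in Ioi (0 : ℝ), (⟪φ (s + x), φ (s + y)⟫ : ℂ)) :
    (∀ t x y : ℝ, 0 < t → 0 < x → 0 < y →
      K (x + t) (y + t) = ∫ s in Ioi t, (⟪φ (s + x), φ (s + y)⟫ : ℂ)) ∧
    ∀ f : ℝ → ℂ,
      IntegrableOn (fun s => ‖∫ u in Ioi (0 : ℝ), f u • φ (s + u)‖ ^ 2) (Ioi (0 : ℝ)) →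
      (∀ t : ℝ, 0 ≤ t →
          0 ≤ ∫ s in Ioi t, ‖∫ u in Ioi (0 : ℝ), f u • φ (s + u)‖ ^ 2) ∧
      AntitoneOn (fun t => ∫ s in Ioi t, ‖∫ u in Ioi (0 : ℝ), f u • φ (s + u)‖ ^ 2)
        (Ici (0 : ℝ)) :=
  stmt11_general φ K hK
end

section
/- Let D be a skew-adjoint operator generating a unitary group e^{sD} on a Hilbert space H, and suppose e^{-sD} e^{-tA} = e^{-iαst} e^{-tA} e^{-sD} for all s ∈ ℝ, t ≥ 0 and some α ∈ ℝ, where e^{-tA} is a C₀-semigroup. Then the observability Gramian Q^{(s)} of the system (−A, e^{sD}B, C e^{-sD}) satisfies Q^{(s)} = e^{sD} Q^{(0)} e^{-sD}; consequently, if Q^{(0)} is trace class, det(I + λ Q^{(s)}) = det(I + λ Q^{(0)}) for all λ ∈ ℂ and s ∈ ℝ. -/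
open MeasureTheory Set
open scoped ComplexInnerProductSpace

/-- A (nuclear) trace-class operator on a Hilbert space. -/
def IsTraceClassOp {H : Type*} [NormedAddCommGroup H] [InnerProductSpace ℂ H]
    (T : H →L[ℂ] H) : Prop :=
  ∃ g h : ℕ → H, Summable (fun n => ‖g n‖ * ‖h n‖) ∧
    ∀ x, T x = ∑' n, (⟪g n, x⟫ : ℂ) • h n

/-- Let `e^{sD} = U s` be a unitary group and `e^{-tA} = T t` a
`C₀`-semigroup on a Hilbert space `H` satisfying the Weyl-type commutation relation
`e^{-sD} e^{-tA} = e^{-iαst} e^{-tA} e^{-sD}`.  Then the observability Gramian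
`Q^{(s)} = ∫₀^∞ (T t)* (U s) C* C (U (-s)) (T t) dt` of the system
`(−A, e^{sD}B, C e^{-sD})` satisfies `Q^{(s)} = U s ∘ Q^{(0)} ∘ U(−s)`; consequently if
`Q^{(0)}` is trace class then the Fredholm determinant — axiomatised as any functional
`d` invariant under conjugation by invertible operators — satisfies
`det(I + λ Q^{(s)}) = det(I + λ Q^{(0)})` for all `λ ∈ ℂ` and `s ∈ ℝ`. -/
theorem stmt19 {H H₀ : Type*}
    [NormedAddCommGroup H] [InnerProductSpace ℂ H] [CompleteSpace H]
    [NormedAddCommGroup H₀] [InnerProductSpace ℂ H₀] [CompleteSpace H₀]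
    (T U : ℝ → (H →L[ℂ] H)) (C : H →L[ℂ] H₀) (α : ℝ)
    (hT0 : T 0 = 1) (hTadd : ∀ s t : ℝ, 0 ≤ s → 0 ≤ t → T (s + t) = (T s).comp (T t))
    (hTbdd : ∃ M : ℝ, ∀ t : ℝ, 0 ≤ t → ‖T t‖ ≤ M)
    (hTcont : ∀ x : H, ContinuousOn (fun t => T t x) (Ici (0 : ℝ)))
    (hU0 : U 0 = 1) (hUadd : ∀ s s' : ℝ, U (s + s') = (U s).comp (U s'))
    (hUiso : ∀ (s : ℝ) (x : H), ‖U s x‖ = ‖x‖)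
    (hcomm : ∀ s t : ℝ, 0 ≤ t →
      (U (-s)).comp (T t) =
        Complex.exp (-(Complex.I * α * s * t)) • ((T t).comp (U (-s))))
    (Q : ℝ → (H →L[ℂ] H))
    (hQint : ∀ s : ℝ, IntegrableOn
      (fun t : ℝ => ((T t).adjoint).comp
        ((U s).comp ((C.adjoint.comp C).comp ((U (-s)).comp (T t)))))
      (Ioi (0 : ℝ)))
    (hQ : ∀ s : ℝ, Q s = ∫ t in Ioi (0 : ℝ),
      ((T t).adjoint).comp
        ((U s).comp ((C.adjoint.comp C).comp ((U (-s)).comp (T t)))))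
    (htc : IsTraceClassOp (Q 0))
    (d : (H →L[ℂ] H) → ℂ)
    (hdconj : ∀ V W X : H →L[ℂ] H, V * W = 1 → W * V = 1 → d (V * X * W) = d X) :
    (∀ s : ℝ, Q s = (U s) * Q 0 * (U (-s))) ∧
      ∀ (lam : ℂ) (s : ℝ), d (1 + lam • Q s) = d (1 + lam • Q 0) := by
  classical
  -- U is a group: U s * U (-s) = 1
  have hUinv : ∀ s : ℝ, (U s).comp (U (-s)) = 1 := by
    intro s; rw [← hUadd, add_neg_cancel, hU0]
  have hUinv' : ∀ s : ℝ, (U (-s)).comp (U s) = 1 := by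
    intro s; rw [← hUadd, neg_add_cancel, hU0]
  -- U s preserves inner products
  have hinner : ∀ (s : ℝ) (x y : H), (⟪U s x, U s y⟫ : ℂ) = ⟪x, y⟫ := by
    intro s x y
    exact (LinearMap.norm_map_iff_inner_map_map (U s)).mp (hUiso s) x y
  -- adjoint of U s is U (-s)
  have hUadj : ∀ s : ℝ, ContinuousLinearMap.adjoint (U s) = U (-s) := by
    intro s
    symm
    rw [ContinuousLinearMap.eq_adjoint_iff]
    intro x y
    have : (⟪U (-s) x, y⟫ : ℂ) = ⟪U s (U (-s) x), U s y⟫ := (hinner s _ _).symm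
    rw [this]
    have hx : U s (U (-s) x) = x := by
      have := congrArg (fun (f : H →L[ℂ] H) => f x) (hUinv s)
      simpa using this
    rw [hx]
  -- key scalar facts
  have hcexp : ∀ s t : ℝ,
      (starRingEnd ℂ) (Complex.exp (-(Complex.I * α * s * t))) =
        Complex.exp (Complex.I * α * s * t) := by
    intro s t
    rw [← Complex.exp_conj]
    congr 1
    simp [map_mul, Complex.conj_I, Complex.conj_ofReal]
  have hcc : ∀ s t : ℝ,
      Complex.exp (-(Complex.I * α * s * t)) * Complex.exp (Complex.I * α * s * t) = 1 := by
    intro s t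
    rw [← Complex.exp_add]
    simp
  -- adjoint version of the commutation relation: (T t)† ∘ U s = exp(iαst) • (U s ∘ (T t)†)
  have hcomm' : ∀ s t : ℝ, 0 ≤ t →
      ((T t).adjoint).comp (U s) =
        Complex.exp (Complex.I * α * s * t) • ((U s).comp ((T t).adjoint)) := by
    intro s t ht
    have h := congrArg ContinuousLinearMap.adjoint (hcomm s t ht)
    rw [ContinuousLinearMap.adjoint_comp, hUadj, neg_neg] at h
    rw [map_smulₛₗ, ContinuousLinearMap.adjoint_comp, hUadj, neg_neg, hcexp] at h
    exact h
  -- equality of the integrands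
  have hint_eq : ∀ s t : ℝ, 0 ≤ t →
      ((T t).adjoint).comp
          ((U s).comp ((C.adjoint.comp C).comp ((U (-s)).comp (T t)))) =
        (U s).comp ((((T t).adjoint).comp
          ((U 0).comp ((C.adjoint.comp C).comp ((U (-0)).comp (T t))))).comp (U (-s))) := by
    intro s t ht
    ext x
    have h1 := congrArg (fun f : H →L[ℂ] H => f x) (hcomm s t ht)
    have h2 := fun y : H => congrArg (fun f : H →L[ℂ] H => f y) (hcomm' s t ht)
    simp only [ContinuousLinearMap.comp_apply, ContinuousLinearMap.smul_apply] at h1 h2 ⊢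
    rw [hU0, neg_zero, hU0]
    simp only [ContinuousLinearMap.one_apply]
    rw [h1]
    simp only [_root_.map_smul]
    rw [h2, smul_smul, hcc s t, one_smul]
  -- the conjugation map as a continuous linear map on operators
  have hmain : ∀ s : ℝ, Q s = (U s) * Q 0 * (U (-s)) := by
    intro s
    set L : (H →L[ℂ] H) →L[ℂ] (H →L[ℂ] H) :=
      (ContinuousLinearMap.compL ℂ H H H (U s)).comp
        ((ContinuousLinearMap.compL ℂ H H H).flip (U (-s))) with hL
    have hLapp : ∀ X : H →L[ℂ] H, L X = (U s).comp (X.comp (U (-s))) := by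
      intro X; rfl
    rw [hQ s, hQ 0]
    have h1 : (∫ t in Ioi (0 : ℝ),
        ((T t).adjoint).comp
          ((U s).comp ((C.adjoint.comp C).comp ((U (-s)).comp (T t))))) =
        ∫ t in Ioi (0 : ℝ), L (((T t).adjoint).comp
          ((U 0).comp ((C.adjoint.comp C).comp ((U (-0)).comp (T t))))) := by
      apply setIntegral_congr_fun measurableSet_Ioi
      intro t ht
      exact hint_eq s t (le_of_lt ht)
    rw [h1, L.integral_comp_comm (hQint 0)]
    rw [hLapp]
    rfl
  refine ⟨hmain, ?_⟩
  intro lam s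
  have hVW : (U s) * (U (-s)) = 1 := hUinv s
  have hWV : (U (-s)) * (U s) = 1 := hUinv' s
  have : (1 : H →L[ℂ] H) + lam • Q s = (U s) * (1 + lam • Q 0) * (U (-s)) := by
    rw [hmain s]
    rw [mul_add, add_mul, mul_one, hVW]
    congr 1
    rw [mul_smul_comm, smul_mul_assoc]
  rw [this]
  exact hdconj (U s) (U (-s)) _ hVW hWV
end
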